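/- Let T, M, n be positive natural numbers, let Y be a T×n complex matrix and S a T×M complex matrix, and let 1 ≤ i ≤ j ≤ T. Let S_{1:i}, Y_{1:i} (respectively S_{1:j}, Y_{1:j}) denote the submatrices formed by the first i (respectively j) rows of S and Y. If S_{1:i}*S_{1:i} and S_{1:j}*S_{1:j} are both invertible, then ‖Y_{1:i} − S_{1:i}(S_{1:i}*S_{1:i})⁻¹S_{1:i}*Y_{1:i}‖² ≤ ‖Y_{1:j} − S_{1:j}(S_{1:j}*S_{1:j})⁻¹S_{1:j}*Y_{1:j}‖²; that is, the partial projection-residual metric is monotone nondecreasing in the number of retained rows. -/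
import Mathlib

open Matrix

/-- Squared Frobenius norm of a complex matrix: `‖A‖² = tr(AᴴA)` (a real number). -/
noncomputable def frobSq {m n : ℕ} (A : Matrix (Fin m) (Fin n) ℂ) : ℝ :=
  (Matrix.trace (Aᴴ * A)).re

lemma frobSq_eq {m n : ℕ} (A : Matrix (Fin m) (Fin n) ℂ) :
    frobSq A = ∑ l, ∑ k, Complex.normSq (A k l) := by
  simp [frobSq, Matrix.trace, Matrix.diag, Matrix.mul_apply, Matrix.conjTranspose_apply,
    Complex.normSq_eq_conj_mul_self, Complex.normSq_apply]

lemma frobSq_nonneg {m n : ℕ} (A : Matrix (Fin m) (Fin n) ℂ) : 0 ≤ frobSq A := by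
  rw [frobSq_eq]
  exact Finset.sum_nonneg fun l _ => Finset.sum_nonneg fun k _ => Complex.normSq_nonneg _

lemma frobSq_add_of_orth {m n : ℕ} (A B : Matrix (Fin m) (Fin n) ℂ)
    (h : Aᴴ * B = 0) : frobSq (A + B) = frobSq A + frobSq B := by
  have h2 : Bᴴ * A = 0 := by
    have := congrArg Matrix.conjTranspose h
    simpa [Matrix.conjTranspose_mul] using this
  simp [frobSq, Matrix.conjTranspose_add, Matrix.add_mul, Matrix.mul_add, h, h2,
    Matrix.trace_add]

/-- Least squares optimality. -/
lemma ls_opt {m M n : ℕ} (S : Matrix (Fin m) (Fin M) ℂ) (Y : Matrix (Fin m) (Fin n) ℂ)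
    (X : Matrix (Fin M) (Fin n) ℂ) (hu : IsUnit (Sᴴ * S)) :
    frobSq (Y - S * (Sᴴ * S)⁻¹ * Sᴴ * Y) ≤ frobSq (Y - S * X) := by
  set G := Sᴴ * S with hG
  have hdet : IsUnit G.det := (Matrix.isUnit_iff_isUnit_det G).mp hu
  set Xh : Matrix (Fin M) (Fin n) ℂ := G⁻¹ * Sᴴ * Y with hXh
  have hR : Y - S * G⁻¹ * Sᴴ * Y = Y - S * Xh := by
    simp [hXh, Matrix.mul_assoc]
  have hSR : Sᴴ * (Y - S * Xh) = 0 := by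
    have : G * G⁻¹ = 1 := Matrix.mul_nonsing_inv G hdet
    calc Sᴴ * (Y - S * Xh) = Sᴴ * Y - (G * G⁻¹) * (Sᴴ * Y) := by
          simp [hXh, Matrix.mul_sub, hG, Matrix.mul_assoc]
      _ = 0 := by simp [this]
  have hsplit : Y - S * X = (Y - S * Xh) + S * (Xh - X) := by
    simp [Matrix.mul_sub]
  have horth : (Y - S * Xh)ᴴ * (S * (Xh - X)) = 0 := by
    have hRS : (Y - S * Xh)ᴴ * S = 0 := by
      have := congrArg Matrix.conjTranspose hSR
      simpa [Matrix.conjTranspose_mul] using this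
    rw [← Matrix.mul_assoc, hRS, Matrix.zero_mul]
  rw [hR, hsplit, frobSq_add_of_orth _ _ horth]
  have := frobSq_nonneg (S * (Xh - X))
  linarith

/-- Fewer rows, smaller Frobenius norm. -/
lemma rows_mono {i j n : ℕ} (h : i ≤ j) (A : Matrix (Fin j) (Fin n) ℂ) :
    frobSq (A.submatrix (Fin.castLE h) id) ≤ frobSq A := by
  rw [frobSq_eq, frobSq_eq]
  refine Finset.sum_le_sum fun l _ => ?_
  have : ∑ k : Fin i, Complex.normSq (A (Fin.castLE h k) l)
      = ∑ k ∈ Finset.univ.map ⟨Fin.castLE h, Fin.castLE_injective h⟩,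
        Complex.normSq (A k l) := by
    simp [Finset.sum_map]
  simp only [Matrix.submatrix_apply, id]
  rw [this]
  exact Finset.sum_le_sum_of_subset_of_nonneg (Finset.subset_univ _)
    (fun _ _ _ => Complex.normSq_nonneg _)

/-- monotonicity of the partial projection-residual metric in the
number of retained rows. -/
theorem stmt_1 (T M n : ℕ) (hT : 0 < T) (hM : 0 < M) (hn : 0 < n)
    (Y : Matrix (Fin T) (Fin n) ℂ) (S : Matrix (Fin T) (Fin M) ℂ)
    (i j : ℕ) (hi1 : 1 ≤ i) (hij : i ≤ j) (hj : j ≤ T)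
    (Si : Matrix (Fin i) (Fin M) ℂ) (hSi : Si = S.submatrix (Fin.castLE (hij.trans hj)) id)
    (Yi : Matrix (Fin i) (Fin n) ℂ) (hYi : Yi = Y.submatrix (Fin.castLE (hij.trans hj)) id)
    (Sj : Matrix (Fin j) (Fin M) ℂ) (hSj : Sj = S.submatrix (Fin.castLE hj) id)
    (Yj : Matrix (Fin j) (Fin n) ℂ) (hYj : Yj = Y.submatrix (Fin.castLE hj) id)
    (hSiu : IsUnit (Siᴴ * Si)) (hSju : IsUnit (Sjᴴ * Sj)) :
    frobSq (Yi - Si * (Siᴴ * Si)⁻¹ * Siᴴ * Yi) ≤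
      frobSq (Yj - Sj * (Sjᴴ * Sj)⁻¹ * Sjᴴ * Yj) := by
  set Xj : Matrix (Fin M) (Fin n) ℂ := (Sjᴴ * Sj)⁻¹ * Sjᴴ * Yj with hXj
  have key : Yi - Si * Xj = (Yj - Sj * Xj).submatrix (Fin.castLE hij) id := by
    ext k l
    simp [hSi, hYi, hSj, hYj, Matrix.sub_apply, Matrix.mul_apply, Matrix.submatrix_apply]
  calc frobSq (Yi - Si * (Siᴴ * Si)⁻¹ * Siᴴ * Yi) ≤ frobSq (Yi - Si * Xj) :=
        ls_opt Si Yi Xj hSiu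
    _ = frobSq ((Yj - Sj * Xj).submatrix (Fin.castLE hij) id) := by rw [key]
    _ ≤ frobSq (Yj - Sj * Xj) := rows_mono hij _
    _ = frobSq (Yj - Sj * (Sjᴴ * Sj)⁻¹ * Sjᴴ * Yj) := by
        rw [hXj, Matrix.mul_assoc, Matrix.mul_assoc, Matrix.mul_assoc]
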